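/- Let n ≥ 1 and k ∈ ℕ. Let u : ℝ × ℝ^n → ℂ be smooth, with u(t,·) Schwartz for every t and all Schwartz seminorms of u(t,·) and ∂_t u(t,·) bounded locally uniformly in t, satisfying the free Schrödinger equation ∂_t u(t,z) = i Σ_j ∂²_{z_j} u(t,z) (equivalently (D_t + Δ)u = 0). Then the module regularity norm is conserved along the flow: for all s, t ∈ ℝ with s ≥ 1/2 and t ≥ 1/2, ‖u(t,·)‖_{W^k_{M_t}} = ‖u(s,·)‖_{W^k_{M_s}}. -/

import Mathlib

open MeasureTheory Complex Filter

noncomputable section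

abbrev Eucl (n : ℕ) := EuclideanSpace ℝ (Fin n)

/-- Partial derivative in the `j`-th coordinate direction. -/
def pd {n : ℕ} (j : Fin n) (u : Eucl n → ℂ) : Eucl n → ℂ :=
  fun z => fderiv ℝ u z (EuclideanSpace.single j 1)

/-- `D_{z_j} = -i ∂_{z_j}`. -/
def Dop {n : ℕ} (j : Fin n) (u : Eucl n → ℂ) : Eucl n → ℂ :=
  fun z => -Complex.I * pd j u z

/-- Index type for the modules `M_t`, `M_{t,0}`, `𝒩`. -/
abbrev MIdx (n : ℕ) := Unit ⊕ (Fin n × Fin n) ⊕ Fin n ⊕ Fin n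

/-- Generators of the module `M_t` (for `|t| ≥ 1/2`): identity,
rotations `z_j D_{z_i} - z_i D_{z_j}`, `2t D_{z_j} - z_j`, and `D_{z_j}`. -/
def Mgen {n : ℕ} (t : ℝ) : MIdx n → (Eucl n → ℂ) → (Eucl n → ℂ)
  | Sum.inl _ => id
  | Sum.inr (Sum.inl (i, j)) => fun u z => (z j : ℂ) * Dop i u z - (z i : ℂ) * Dop j u z
  | Sum.inr (Sum.inr (Sum.inl j)) => fun u z => 2 * (t : ℂ) * Dop j u z - (z j : ℂ) * u z
  | Sum.inr (Sum.inr (Sum.inr j)) => fun u => Dop j u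

/-- Generators of the module `M_{t,0}` (for `|t| ≥ 1/2`): identity,
rotations `z_j D_{z_i} - z_i D_{z_j}`, `2t D_{z_j}`, and `D_{z_j} + z_j/(2t)`. -/
def M0gen {n : ℕ} (t : ℝ) : MIdx n → (Eucl n → ℂ) → (Eucl n → ℂ)
  | Sum.inl _ => id
  | Sum.inr (Sum.inl (i, j)) => fun u z => (z j : ℂ) * Dop i u z - (z i : ℂ) * Dop j u z
  | Sum.inr (Sum.inr (Sum.inl j)) => fun u z => 2 * (t : ℂ) * Dop j u z
  | Sum.inr (Sum.inr (Sum.inr j)) => fun u z => Dop j u z + ((z j : ℂ) / (2 * (t : ℂ))) * u z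

/-- For `|t| < 1/2` the modules are defined with `t` replaced by `t+1`. -/
def tEff (t : ℝ) : ℝ := if 1/2 ≤ |t| then t else t + 1

/-- Apply an ordered tuple of generators `A₁ ⋯ A_k` to `u`. -/
def applyTuple {X ι : Type*} (gen : ι → (X → ℂ) → (X → ℂ)) {k : ℕ}
    (A : Fin k → ι) (u : X → ℂ) : X → ℂ :=
  (List.ofFn fun i => gen (A i)).foldr (fun f v => f v) u

/-- The module regularity norm `‖u‖_{W^k}` with respect to a generating family `gen`:
square root of the sum of `‖A₁⋯A_k u‖²_{L²}` over all ordered `k`-tuples. -/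
def Wnorm {n : ℕ} {ι : Type*} [Fintype ι] (gen : ι → (Eucl n → ℂ) → (Eucl n → ℂ))
    (k : ℕ) (u : Eucl n → ℂ) : ℝ :=
  Real.sqrt (∑ A : Fin k → ι, ((eLpNorm (applyTuple gen A u) 2 volume).toReal) ^ 2)

open SchwartzMap
set_option synthInstance.maxHeartbeats 400000
set_option maxHeartbeats 1000000
set_option linter.unusedVariables false

variable {n : ℕ}

abbrev Cinf : WithTop ℕ∞ := ((⊤:ℕ∞) : WithTop ℕ∞)
lemma one_le_Cinf : (1 : WithTop ℕ∞) ≤ Cinf := by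
  have : ((1:ℕ∞) : WithTop ℕ∞) ≤ ((⊤:ℕ∞) : WithTop ℕ∞) := by exact_mod_cast le_top
  simpa using this
lemma two_le_Cinf : (2 : WithTop ℕ∞) ≤ Cinf := by
  have : ((2:ℕ∞) : WithTop ℕ∞) ≤ ((⊤:ℕ∞) : WithTop ℕ∞) := by exact_mod_cast le_top
  simpa using this
lemma Cinf_add_one_le : Cinf + 1 ≤ Cinf := by simp
lemma Cinf_ne_zero : Cinf ≠ 0 := by simp [Cinf]


section joint
variable {F : ℝ × Eucl n → ℂ} (hF : ContDiff ℝ Cinf F)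

/-- slice in z of jointly smooth function: its pd. -/
lemma pd_slice (hF : ContDiff ℝ Cinf F) (t : ℝ) (j : Fin n) (z : Eucl n) :
    pd j (fun z' => F (t, z')) z = fderiv ℝ F (t, z) (0, EuclideanSpace.single j 1) := by
  have h1 := hasFDerivAt_prodMk_right (𝕜 := ℝ) t z
  have h2 : HasFDerivAt F (fderiv ℝ F (t, z)) (t, z) :=
    (hF.differentiable Cinf_ne_zero (t, z)).hasFDerivAt
  have h3 := h2.comp z h1
  have : (fun z' : Eucl n => F (t, z')) = F ∘ (Prod.mk t) := rfl
  rw [pd, this, h3.fderiv]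
  rfl

lemma hasDerivAt_slice (hF : ContDiff ℝ Cinf F) (t : ℝ) (z : Eucl n) :
    HasDerivAt (fun s => F (s, z)) (fderiv ℝ F (t, z) (1, 0)) t := by
  have h1 := hasFDerivAt_prodMk_left (𝕜 := ℝ) t z
  have h2 : HasFDerivAt F (fderiv ℝ F (t, z)) (t, z) :=
    (hF.differentiable Cinf_ne_zero (t, z)).hasFDerivAt
  have h3 := h2.comp t h1
  have h4 := h3.hasDerivAt
  simp at h4
  exact h4

/-- directional derivative of a smooth function is smooth -/
lemma contDiff_dirDeriv {E G : Type*} [NormedAddCommGroup E] [NormedSpace ℝ E]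
    [NormedAddCommGroup G] [NormedSpace ℝ G] {f : E → G} (hf : ContDiff ℝ Cinf f) (a : E) :
    ContDiff ℝ Cinf (fun q => fderiv ℝ f q a) := by
  have h1 : ContDiff ℝ Cinf (fderiv ℝ f) := (hf.fderiv_right (m := Cinf) Cinf_add_one_le)
  exact (ContinuousLinearMap.apply ℝ G a).contDiff.comp h1

/-- Clairaut for directional derivatives. -/
lemma fderiv_swap {E : Type*} [NormedAddCommGroup E] [NormedSpace ℝ E]
    {f : E → ℂ} (hf : ContDiff ℝ Cinf f) (q a b : E) :
    fderiv ℝ (fun q' => fderiv ℝ f q' a) q b = fderiv ℝ (fun q' => fderiv ℝ f q' b) q a := by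
  have hsym : fderiv ℝ (fderiv ℝ f) q b a = fderiv ℝ (fderiv ℝ f) q a b := by
    have := (hf.contDiffAt (x := q)).isSymmSndFDerivAt (by rw [minSmoothness_of_isRCLikeNormedField]; exact two_le_Cinf)
    exact this b a
  have h1 : ∀ c : E, fderiv ℝ (fun q' => fderiv ℝ f q' c) q =
      (ContinuousLinearMap.apply ℝ ℂ c).comp (fderiv ℝ (fderiv ℝ f) q) := by
    intro c
    have hd : DifferentiableAt ℝ (fderiv ℝ f) q :=
      ((hf.fderiv_right (m := Cinf) Cinf_add_one_le).differentiable Cinf_ne_zero) q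
    exact ((ContinuousLinearMap.apply ℝ ℂ c).hasFDerivAt.comp q hd.hasFDerivAt).fderiv
  rw [h1 a, h1 b]
  simpa using hsym
end joint


section pdalg
variable {f g : Eucl n → ℂ}

lemma contDiff_pd (hf : ContDiff ℝ Cinf f) (j : Fin n) : ContDiff ℝ Cinf (pd j f) := by
  have h1 : ContDiff ℝ Cinf (fderiv ℝ f) := hf.fderiv_right (m := Cinf) Cinf_add_one_le
  exact (ContinuousLinearMap.apply ℝ ℂ (EuclideanSpace.single j 1)).contDiff.comp h1

lemma pd_swap (hf : ContDiff ℝ Cinf f) (i j : Fin n) (z : Eucl n) :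
    pd i (pd j f) z = pd j (pd i f) z := by
  have hsym := ((hf.contDiffAt (x := z)).isSymmSndFDerivAt (by rw [minSmoothness_of_isRCLikeNormedField]; exact two_le_Cinf))
    (EuclideanSpace.single i 1) (EuclideanSpace.single j 1)
  have h1 : ∀ c : Eucl n, fderiv ℝ (fun q' => fderiv ℝ f q' c) z =
      (ContinuousLinearMap.apply ℝ ℂ c).comp (fderiv ℝ (fderiv ℝ f) z) := by
    intro c
    have hd : DifferentiableAt ℝ (fderiv ℝ f) z :=
      ((hf.fderiv_right (m := Cinf) Cinf_add_one_le).differentiable Cinf_ne_zero) z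
    exact ((ContinuousLinearMap.apply ℝ ℂ c).hasFDerivAt.comp z hd.hasFDerivAt).fderiv
  show fderiv ℝ (pd j f) z _ = fderiv ℝ (pd i f) z _
  rw [show pd j f = fun q' => fderiv ℝ f q' (EuclideanSpace.single j 1) from rfl,
    show pd i f = fun q' => fderiv ℝ f q' (EuclideanSpace.single i 1) from rfl, h1, h1]
  simpa using hsym

lemma pd_const_mul (hf : ContDiff ℝ Cinf f) (c : ℂ) (j : Fin n) (z : Eucl n) :
    pd j (fun w => c * f w) z = c * pd j f z := by
  unfold pd
  rw [fderiv_const_mul (hf.differentiable Cinf_ne_zero z) c]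
  simp

lemma pd_fun_add (hf : ContDiff ℝ Cinf f) (hg : ContDiff ℝ Cinf g) (j : Fin n) (z : Eucl n) :
    pd j (fun w => f w + g w) z = pd j f z + pd j g z := by
  unfold pd
  rw [fderiv_fun_add (hf.differentiable Cinf_ne_zero z) (hg.differentiable Cinf_ne_zero z)]
  simp

lemma pd_fun_sub (hf : ContDiff ℝ Cinf f) (hg : ContDiff ℝ Cinf g) (j : Fin n) (z : Eucl n) :
    pd j (fun w => f w - g w) z = pd j f z - pd j g z := by
  unfold pd
  rw [fderiv_fun_sub (hf.differentiable Cinf_ne_zero z) (hg.differentiable Cinf_ne_zero z)]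
  simp

lemma pd_sum {ι : Type*} (s : Finset ι) (A : ι → Eucl n → ℂ)
    (hA : ∀ i, ContDiff ℝ Cinf (A i)) (j : Fin n) (z : Eucl n) :
    pd j (fun w => ∑ i ∈ s, A i w) z = ∑ i ∈ s, pd j (A i) z := by
  unfold pd
  rw [fderiv_fun_sum (fun i _ => (hA i).differentiable Cinf_ne_zero z)]
  simp

/-- coordinate function as ℂ-valued -/
def coordC (i : Fin n) : Eucl n → ℂ := fun z => (z i : ℂ)

lemma coordC_clm (i : Fin n) :
    coordC (n := n) i = ⇑(Complex.ofRealCLM.comp (EuclideanSpace.proj (𝕜 := ℝ) i)) := rfl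

lemma contDiff_coordC (i : Fin n) : ContDiff ℝ Cinf (coordC (n := n) i) := by
  rw [coordC_clm]; exact (Complex.ofRealCLM.comp (EuclideanSpace.proj i)).contDiff

lemma pd_coord_mul (hf : ContDiff ℝ Cinf f) (i j : Fin n) (z : Eucl n) :
    pd j (fun w => (w i : ℂ) * f w) z
      = (if i = j then 1 else 0) * f z + (z i : ℂ) * pd j f z := by
  unfold pd
  have hc : DifferentiableAt ℝ (coordC (n := n) i) z :=
    ((contDiff_coordC i).differentiable Cinf_ne_zero z)
  have := fderiv_fun_mul (𝕜 := ℝ) hc (hf.differentiable Cinf_ne_zero z)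
  rw [show (fun w => (w i : ℂ) * f w) = fun w => coordC i w * f w from rfl, this]
  have hcd : fderiv ℝ (coordC (n := n) i) z (EuclideanSpace.single j 1)
      = (if i = j then 1 else 0) := by
    rw [coordC_clm, ContinuousLinearMap.fderiv]
    simp [EuclideanSpace.proj, EuclideanSpace.single_apply]
    split <;> simp_all
  simp only [ContinuousLinearMap.add_apply, ContinuousLinearMap.coe_smul', Pi.smul_apply,
    smul_eq_mul, hcd, coordC]
  ring
end pdalg


section lap
variable {f g : Eucl n → ℂ}

/-- `i` times the (negative) Laplacian: `lap f = I * ∑ j, ∂_j² f`. -/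
def lap {n : ℕ} (f : Eucl n → ℂ) : Eucl n → ℂ :=
  fun z => Complex.I * ∑ j, pd j (pd j f) z

lemma contDiff_sumpd (hf : ContDiff ℝ Cinf f) :
    ContDiff ℝ Cinf (fun z : Eucl n => ∑ j, pd j (pd j f) z) := by
  apply ContDiff.sum
  intro i _
  exact contDiff_pd (contDiff_pd hf i) i

lemma contDiff_lap (hf : ContDiff ℝ Cinf f) : ContDiff ℝ Cinf (lap f) :=
  contDiff_const.mul (contDiff_sumpd hf)

lemma pd_funext {f g : Eucl n → ℂ} (h : ∀ z, f z = g z) (j : Fin n) (z : Eucl n) :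
    pd j f z = pd j g z := by
  have : f = g := funext h
  rw [this]

lemma pd_lap (hf : ContDiff ℝ Cinf f) (j : Fin n) (z : Eucl n) :
    pd j (lap f) z = lap (pd j f) z := by
  unfold lap
  rw [pd_const_mul (contDiff_sumpd hf) Complex.I j z,
    pd_sum Finset.univ (fun i => pd i (pd i f)) (fun i => contDiff_pd (contDiff_pd hf i) i) j z]
  congr 1
  apply Finset.sum_congr rfl
  intro i _
  rw [pd_swap (contDiff_pd hf i) j i z]
  exact pd_funext (fun z'' => pd_swap hf j i z'') i z

lemma lap_const_mul (hf : ContDiff ℝ Cinf f) (c : ℂ) (z : Eucl n) :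
    lap (fun w => c * f w) z = c * lap f z := by
  unfold lap
  have h1 : ∀ i : Fin n, ∀ z' : Eucl n,
      pd i (pd i fun w => c * f w) z' = c * pd i (pd i f) z' := by
    intro i z'
    have he : ∀ w, pd i (fun w' => c * f w') w = c * pd i f w := fun w =>
      pd_const_mul hf c i w
    rw [pd_funext he i z', pd_const_mul (contDiff_pd hf i) c i z']
  rw [Finset.sum_congr rfl (fun i _ => h1 i z)]
  rw [← Finset.mul_sum]
  ring

lemma lap_sub (hf : ContDiff ℝ Cinf f) (hg : ContDiff ℝ Cinf g) (z : Eucl n) :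
    lap (fun w => f w - g w) z = lap f z - lap g z := by
  unfold lap
  have h1 : ∀ i : Fin n, ∀ z' : Eucl n,
      pd i (pd i fun w => f w - g w) z' = pd i (pd i f) z' - pd i (pd i g) z' := by
    intro i z'
    have he : ∀ w, pd i (fun w' => f w' - g w') w = pd i f w - pd i g w := fun w =>
      pd_fun_sub hf hg i w
    rw [pd_funext he i z', pd_fun_sub (contDiff_pd hf i) (contDiff_pd hg i) i z']
  rw [Finset.sum_congr rfl (fun i _ => h1 i z), Finset.sum_sub_distrib]
  ring

lemma lap_coord_mul (hf : ContDiff ℝ Cinf f) (i : Fin n) (z : Eucl n) :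
    lap (fun w => (w i : ℂ) * f w) z
      = (z i : ℂ) * lap f z + 2 * Complex.I * pd i f z := by
  unfold lap
  have h1 : ∀ l : Fin n, ∀ z' : Eucl n,
      pd l (pd l fun w => (w i : ℂ) * f w) z'
        = (2 * (if i = l then 1 else 0)) * pd l f z' + (z' i : ℂ) * pd l (pd l f) z' := by
    intro l z'
    have he : ∀ w, pd l (fun w' => (w' i : ℂ) * f w') w
        = (if i = l then 1 else 0) * f w + (w i : ℂ) * pd l f w := fun w =>
      pd_coord_mul hf i l w
    rw [pd_funext he l z']
    have hsm1 : ContDiff ℝ Cinf (fun w => (if i = l then (1:ℂ) else 0) * f w) :=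
      contDiff_const.mul hf
    have hsm2 : ContDiff ℝ Cinf (fun w : Eucl n => (w i : ℂ) * pd l f w) :=
      (contDiff_coordC i).mul (contDiff_pd hf l)
    rw [pd_fun_add hsm1 hsm2 l z', pd_const_mul hf _ l z', pd_coord_mul (contDiff_pd hf l) i l z']
    ring
  rw [Finset.sum_congr rfl (fun l _ => h1 l z), Finset.sum_add_distrib]
  have h3 : ∀ l : Fin n, (2 * (if i = l then (1:ℂ) else 0)) * pd l f z
      = if i = l then 2 * pd l f z else 0 := by
    intro l; split <;> simp
  have h2 : ∑ l, (2 * (if i = l then (1:ℂ) else 0)) * pd l f z = 2 * pd i f z := by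
    rw [Finset.sum_congr rfl (fun l _ => h3 l)]
    simp
  rw [h2, ← Finset.mul_sum]
  ring

end lap


/-- line derivative on Schwartz space, as a CLM. -/
def pderivCLM (𝕜 : Type*) [RCLike 𝕜] [NormedSpace 𝕜 ℂ] [SMulCommClass ℝ 𝕜 ℂ] (m : Eucl n) :
    𝓢(Eucl n, ℂ) →L[𝕜] 𝓢(Eucl n, ℂ) :=
  LineDeriv.lineDerivOpCLM 𝕜 𝓢(Eucl n, ℂ) m

lemma pderivCLM_apply (𝕜 : Type*) [RCLike 𝕜] [NormedSpace 𝕜 ℂ] [SMulCommClass ℝ 𝕜 ℂ]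
    (m : Eucl n) (f : 𝓢(Eucl n, ℂ)) (x : Eucl n) :
    pderivCLM 𝕜 m f x = fderiv ℝ f x m := rfl

/-- `pd` as a CLM on Schwartz space. -/
def PC (j : Fin n) : 𝓢(Eucl n, ℂ) →L[ℝ] 𝓢(Eucl n, ℂ) :=
  pderivCLM ℝ (EuclideanSpace.single j 1)

lemma PC_apply (j : Fin n) (f : 𝓢(Eucl n, ℂ)) (z : Eucl n) :
    PC j f z = pd j (⇑f) z := pderivCLM_apply ℝ _ f z

/-- `Dop` as a CLM on Schwartz space. -/
def DC (j : Fin n) : 𝓢(Eucl n, ℂ) →L[ℝ] 𝓢(Eucl n, ℂ) :=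
  ((-Complex.I) • pderivCLM ℂ (EuclideanSpace.single j 1)).restrictScalars ℝ

lemma DC_apply (j : Fin n) (f : 𝓢(Eucl n, ℂ)) (z : Eucl n) :
    DC j f z = Dop j (⇑f) z := by
  have : DC j f = (-Complex.I) • (pderivCLM ℂ (EuclideanSpace.single j 1) f) := rfl
  rw [this, SchwartzMap.smul_apply, pderivCLM_apply]
  simp [Dop, pd, smul_eq_mul]

/-- multiplication by `z i` as a CLM on Schwartz space. -/
def QC (i : Fin n) : 𝓢(Eucl n, ℂ) →L[ℝ] 𝓢(Eucl n, ℂ) :=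
  bilinLeftCLM (ContinuousLinearMap.mul ℝ ℂ).flip
    (Complex.ofRealCLM.comp (EuclideanSpace.proj (𝕜 := ℝ) i)).hasTemperateGrowth

lemma QC_apply (i : Fin n) (f : 𝓢(Eucl n, ℂ)) (z : Eucl n) :
    QC i f z = (z i : ℂ) * f z := by
  simp [QC, bilinLeftCLM, mkCLM, mkLM]
  exact mul_comm _ _

/-- Schwartz-level version of `Mgen`. -/
def genCLM (t : ℝ) : MIdx n → (𝓢(Eucl n, ℂ) →L[ℝ] 𝓢(Eucl n, ℂ))
  | Sum.inl _ => ContinuousLinearMap.id ℝ _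
  | Sum.inr (Sum.inl (i, j)) => QC j ∘L DC i - QC i ∘L DC j
  | Sum.inr (Sum.inr (Sum.inl j)) => (2 * t) • DC j - QC j
  | Sum.inr (Sum.inr (Sum.inr j)) => DC j

lemma genCLM_apply (t : ℝ) (a : MIdx n) (f : 𝓢(Eucl n, ℂ)) (z : Eucl n) :
    genCLM t a f z = Mgen t a (⇑f) z := by
  rcases a with _ | a
  · rfl
  rcases a with ⟨i, j⟩ | a
  · simp [genCLM, Mgen, QC_apply, DC_apply]
  rcases a with j | j
  · simp [genCLM, Mgen, QC_apply, DC_apply]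
    try push_cast
    try ring
  · simp [genCLM, Mgen, DC_apply]

/-- A family of Schwartz maps is (seminorm-)bounded on `K`. -/
def BddFam {n : ℕ} (K : Set ℝ) (fam : ℝ → 𝓢(Eucl n, ℂ)) : Prop :=
  ∀ m l : ℕ, ∃ C : ℝ, ∀ t ∈ K, SchwartzMap.seminorm ℝ m l (fam t) ≤ C

lemma BddFam.vonN {K : Set ℝ} {fam : ℝ → 𝓢(Eucl n, ℂ)} (h : BddFam K fam) :
    Bornology.IsVonNBounded ℝ (fam '' K) := by
  rw [(schwartz_withSeminorms ℝ (Eucl n) ℂ).isVonNBounded_iff_seminorm_bounded]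
  rintro ⟨m, l⟩
  obtain ⟨C, hC⟩ := h m l
  refine ⟨max C 0 + 1, by positivity, ?_⟩
  rintro x ⟨t, ht, rfl⟩
  exact lt_of_le_of_lt ((hC t ht).trans (le_max_left _ _)) (lt_add_one _)

lemma BddFam.of_vonN {K : Set ℝ} {fam : ℝ → 𝓢(Eucl n, ℂ)}
    (h : Bornology.IsVonNBounded ℝ (fam '' K)) : BddFam K fam := by
  intro m l
  rw [(schwartz_withSeminorms ℝ (Eucl n) ℂ).isVonNBounded_iff_seminorm_bounded] at h
  obtain ⟨r, _, hr⟩ := h (m, l)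
  exact ⟨r, fun t ht => (hr _ ⟨t, ht, rfl⟩).le⟩

lemma BddFam.clm {K : Set ℝ} {fam : ℝ → 𝓢(Eucl n, ℂ)} (h : BddFam K fam)
    (T : 𝓢(Eucl n, ℂ) →L[ℝ] 𝓢(Eucl n, ℂ)) : BddFam K (fun t => T (fam t)) := by
  apply BddFam.of_vonN
  have := (h.vonN.image T)
  apply this.subset
  rintro x ⟨t, ht, rfl⟩
  exact ⟨fam t, ⟨t, ht, rfl⟩, rfl⟩

lemma BddFam.gen {K : Set ℝ} {fam : ℝ → 𝓢(Eucl n, ℂ)} (h : BddFam K fam)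
    (hK : IsCompact K) (a : MIdx n) : BddFam K (fun t => genCLM t a (fam t)) := by
  rcases a with _ | a
  · exact h
  rcases a with ⟨i, j⟩ | a
  · exact h.clm _
  rcases a with j | j
  swap
  · exact h.clm _
  · -- (2t) • DC j (fam t) - QC j (fam t)
    intro m l
    obtain ⟨R, hR⟩ := hK.isBounded.subset_closedBall 0
    obtain ⟨C1, hC1⟩ := (h.clm (DC j)) m l
    obtain ⟨C2, hC2⟩ := (h.clm (QC j)) m l
    refine ⟨2 * |R| * max C1 0 + C2, fun t ht => ?_⟩
    have htR : |t| ≤ |R| := by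
      have := hR ht
      simp only [Metric.mem_closedBall, Real.dist_eq, sub_zero] at this
      exact this.trans (le_abs_self R)
    have heq : genCLM t (Sum.inr (Sum.inr (Sum.inl j))) (fam t)
        = (2 * t) • (DC j (fam t)) - QC j (fam t) := by
      simp [genCLM]
    have h1 : SchwartzMap.seminorm ℝ m l (genCLM t (Sum.inr (Sum.inr (Sum.inl j))) (fam t))
        ≤ SchwartzMap.seminorm ℝ m l ((2 * t) • (DC j (fam t)))
          + SchwartzMap.seminorm ℝ m l (QC j (fam t)) := by
      rw [heq]; exact map_sub_le_add _ _ _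
    have h2 : SchwartzMap.seminorm ℝ m l ((2 * t) • (DC j (fam t)))
        = |2 * t| * SchwartzMap.seminorm ℝ m l (DC j (fam t)) := by
      rw [map_smul_eq_mul, Real.norm_eq_abs]
    refine h1.trans ?_
    rw [h2]
    gcongr ?_ + ?_
    · have hb : |2 * t| ≤ 2 * |R| := by
        rw [abs_mul]
        have : |(2:ℝ)| = 2 := by norm_num
        rw [this]; gcongr
      exact mul_le_mul hb ((hC1 t ht).trans (le_max_left _ _)) (apply_nonneg _ _)
        (by positivity)
    · exact hC2 t ht


section Sol
open Complex

/-- A Schwartz-class solution family of the free Schrödinger equation. -/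
structure Sol (n : ℕ) where
  w : ℝ → 𝓢(Eucl n, ℂ)
  smooth : ContDiff ℝ Cinf fun q : ℝ × Eucl n => w q.1 q.2
  bdd : ∀ K : Set ℝ, IsCompact K → BddFam K w
  eqn : ∀ t z, HasDerivAt (fun s => w s z) (lap (⇑(w t)) z) t

variable (S : Sol n)

lemma Sol.sm (t : ℝ) : ContDiff ℝ Cinf (⇑(S.w t)) := (S.w t).smooth'

lemma Sol.hasDerivAt_pd (j : Fin n) (t : ℝ) (z : Eucl n) :
    HasDerivAt (fun s => pd j (⇑(S.w s)) z) (pd j (lap ⇑(S.w t)) z) t := by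
  have hF : ContDiff ℝ Cinf (fun q : ℝ × Eucl n => S.w q.1 q.2) := S.smooth
  have hG : ContDiff ℝ Cinf (fun q : ℝ × Eucl n =>
      fderiv ℝ (fun q' : ℝ × Eucl n => S.w q'.1 q'.2) q (0, EuclideanSpace.single j 1)) :=
    contDiff_dirDeriv hF _
  have h1 : (fun s => pd j (⇑(S.w s)) z) = fun s =>
      fderiv ℝ (fun q' : ℝ × Eucl n => S.w q'.1 q'.2) (s, z) (0, EuclideanSpace.single j 1) := by
    funext s; exact pd_slice hF s j z
  have h2 := hasDerivAt_slice hG t z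
  rw [h1]
  convert h2 using 1
  have hH : ContDiff ℝ Cinf (fun q : ℝ × Eucl n =>
      fderiv ℝ (fun q' : ℝ × Eucl n => S.w q'.1 q'.2) q (1, 0)) := contDiff_dirDeriv hF _
  have h3 := fderiv_swap hF (t, z) (1, (0:Eucl n)) ((0:ℝ), EuclideanSpace.single j 1)
  have h5 : (fun z' => fderiv ℝ (fun q' : ℝ × Eucl n => S.w q'.1 q'.2) (t, z') (1, 0))
      = lap ⇑(S.w t) := by
    funext z'
    exact (hasDerivAt_slice hF t z').unique (S.eqn t z')
  calc pd j (lap ⇑(S.w t)) z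
      = pd j (fun z' => fderiv ℝ (fun q' : ℝ × Eucl n => S.w q'.1 q'.2) (t, z') (1, 0)) z := by
        rw [h5]
    _ = fderiv ℝ (fun q : ℝ × Eucl n =>
          fderiv ℝ (fun q' : ℝ × Eucl n => S.w q'.1 q'.2) q (1, 0)) (t, z)
          (0, EuclideanSpace.single j 1) := pd_slice hH t j z
    _ = fderiv ℝ (fun q : ℝ × Eucl n =>
          fderiv ℝ (fun q' : ℝ × Eucl n => S.w q'.1 q'.2) q (0, EuclideanSpace.single j 1)) (t, z)
          (1, 0) := by rw [← h3]

lemma Sol.hasDerivAt_Dop (j : Fin n) (t : ℝ) (z : Eucl n) :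
    HasDerivAt (fun s => Dop j (⇑(S.w s)) z) (-Complex.I * pd j (lap ⇑(S.w t)) z) t := by
  simpa [Dop] using (S.hasDerivAt_pd j t z).const_mul (-Complex.I)

lemma Sol.smooth_pd (j : Fin n) :
    ContDiff ℝ Cinf (fun q : ℝ × Eucl n => pd j (⇑(S.w q.1)) q.2) := by
  have hF : ContDiff ℝ Cinf (fun q : ℝ × Eucl n => S.w q.1 q.2) := S.smooth
  have : (fun q : ℝ × Eucl n => pd j (⇑(S.w q.1)) q.2) = fun q =>
      fderiv ℝ (fun q' : ℝ × Eucl n => S.w q'.1 q'.2) q (0, EuclideanSpace.single j 1) := by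
    funext q; exact pd_slice hF q.1 j q.2
  rw [this]; exact contDiff_dirDeriv hF _

lemma Sol.smooth_Dop (j : Fin n) :
    ContDiff ℝ Cinf (fun q : ℝ × Eucl n => Dop j (⇑(S.w q.1)) q.2) :=
  contDiff_const.mul (S.smooth_pd j)

lemma smooth_coord2 (i : Fin n) : ContDiff ℝ Cinf (fun q : ℝ × Eucl n => ((q.2 i : ℝ) : ℂ)) :=
  (Complex.ofRealCLM.comp ((EuclideanSpace.proj (𝕜 := ℝ) i).comp
    (ContinuousLinearMap.snd ℝ ℝ (Eucl n)))).contDiff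

lemma smooth_tc : ContDiff ℝ Cinf (fun q : ℝ × Eucl n => ((q.1 : ℝ) : ℂ)) :=
  (Complex.ofRealCLM.comp (ContinuousLinearMap.fst ℝ ℝ (Eucl n))).contDiff

/-- Closure of solutions under the generators `Mgen`. -/
def Sol.gen (a : MIdx n) : Sol n where
  w t := genCLM t a (S.w t)
  smooth := by
    have hco : ∀ (t : ℝ) (z : Eucl n), genCLM t a (S.w t) z = Mgen t a (⇑(S.w t)) z :=
      fun t z => genCLM_apply t a (S.w t) z
    rcases a with _ | ⟨⟨i, j⟩ | j | j⟩
    · exact S.smooth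
    · have : (fun q : ℝ × Eucl n => genCLM q.1 (Sum.inr (Sum.inl (i, j))) (S.w q.1) q.2)
          = fun q : ℝ × Eucl n => ((q.2 j : ℝ) : ℂ) * Dop i (⇑(S.w q.1)) q.2
            - ((q.2 i : ℝ) : ℂ) * Dop j (⇑(S.w q.1)) q.2 := by
        funext q; rw [hco q.1 q.2]; rfl
      rw [this]
      exact ((smooth_coord2 j).mul (S.smooth_Dop i)).sub ((smooth_coord2 i).mul (S.smooth_Dop j))
    · have : (fun q : ℝ × Eucl n => genCLM q.1 (Sum.inr (Sum.inr (Sum.inl j))) (S.w q.1) q.2)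
          = fun q : ℝ × Eucl n => 2 * ((q.1 : ℝ) : ℂ) * Dop j (⇑(S.w q.1)) q.2
            - ((q.2 j : ℝ) : ℂ) * S.w q.1 q.2 := by
        funext q; rw [hco q.1 q.2]; rfl
      rw [this]
      exact ((contDiff_const.mul smooth_tc).mul (S.smooth_Dop j)).sub
        ((smooth_coord2 j).mul S.smooth)
    · have : (fun q : ℝ × Eucl n => genCLM q.1 (Sum.inr (Sum.inr (Sum.inr j))) (S.w q.1) q.2)
          = fun q : ℝ × Eucl n => Dop j (⇑(S.w q.1)) q.2 := by
        funext q; rw [hco q.1 q.2]; rfl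
      rw [this]
      exact S.smooth_Dop j
  bdd K hK := (S.bdd K hK).gen hK a
  eqn := by
    intro t z
    have hw := S.sm t
    have hcoe : ∀ s : ℝ, ⇑(genCLM s a (S.w s)) = Mgen s a (⇑(S.w s)) := by
      intro s; funext z'; exact genCLM_apply s a (S.w s) z'
    rcases a with _ | ⟨⟨i, j⟩ | j | j⟩
    · -- identity
      have h := S.eqn t z
      simp only [hcoe, genCLM, Mgen]
      convert h using 2 <;> rfl
    · -- rotation
      have hfun : (fun s => genCLM s (Sum.inr (Sum.inl (i, j))) (S.w s) z)
          = fun s => (z j : ℂ) * Dop i (⇑(S.w s)) z - (z i : ℂ) * Dop j (⇑(S.w s)) z := by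
        funext s; rw [hcoe s]; rfl
      rw [hfun, hcoe t]
      have hDi : ContDiff ℝ Cinf (Dop i (⇑(S.w t))) := contDiff_const.mul (contDiff_pd hw i)
      have hDj : ContDiff ℝ Cinf (Dop j (⇑(S.w t))) := contDiff_const.mul (contDiff_pd hw j)
      have hder := (((S.hasDerivAt_Dop i t z).const_mul ((z j : ℂ))).sub
        ((S.hasDerivAt_Dop j t z).const_mul ((z i : ℂ))))
      convert hder using 1
      case e'_4 => rfl
      case e'_8 => rfl
      -- compute lap of the rotated function
      have hfun2 : Mgen t (Sum.inr (Sum.inl (i, j))) (⇑(S.w t))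
          = fun z' => (z' j : ℂ) * Dop i (⇑(S.w t)) z' - (z' i : ℂ) * Dop j (⇑(S.w t)) z' := rfl
      rw [hfun2]
      have h1 : ContDiff ℝ Cinf (fun z' : Eucl n => (z' j : ℂ) * Dop i (⇑(S.w t)) z') :=
        (contDiff_coordC j).mul hDi
      have h2 : ContDiff ℝ Cinf (fun z' : Eucl n => (z' i : ℂ) * Dop j (⇑(S.w t)) z') :=
        (contDiff_coordC i).mul hDj
      rw [lap_sub h1 h2 z, lap_coord_mul hDi j z, lap_coord_mul hDj i z]
      have hlapDop : ∀ l : Fin n, lap (Dop l (⇑(S.w t))) z = -Complex.I * pd l (lap ⇑(S.w t)) z := by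
        intro l
        have : Dop l (⇑(S.w t)) = fun z' => -Complex.I * pd l (⇑(S.w t)) z' := rfl
        rw [this, lap_const_mul (contDiff_pd hw l) (-Complex.I) z, pd_lap hw l z]
      have hpdDop : ∀ l m : Fin n, pd l (Dop m (⇑(S.w t))) z
          = -Complex.I * pd l (pd m (⇑(S.w t))) z := by
        intro l m
        have : Dop m (⇑(S.w t)) = fun z' => -Complex.I * pd m (⇑(S.w t)) z' := rfl
        rw [this, pd_const_mul (contDiff_pd hw m) (-Complex.I) l z]
      rw [hlapDop i, hlapDop j, hpdDop j i, hpdDop i j,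
        pd_swap hw j i z]
      ring
    · -- galilean
      have hfun : (fun s => genCLM s (Sum.inr (Sum.inr (Sum.inl j))) (S.w s) z)
          = fun s => 2 * ((s : ℝ) : ℂ) * Dop j (⇑(S.w s)) z - (z j : ℂ) * S.w s z := by
        funext s; rw [hcoe s]; rfl
      rw [hfun, hcoe t]
      have htc : HasDerivAt (fun s : ℝ => 2 * ((s : ℝ) : ℂ)) 2 t := by
        simpa using (Complex.ofRealCLM.hasDerivAt (x := t)).const_mul (2 : ℂ)
      have hder := ((htc.mul (S.hasDerivAt_Dop j t z)).sub
        ((S.eqn t z).const_mul ((z j : ℂ))))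
      convert hder using 1
      case e'_4 => rfl
      case e'_8 => rfl
      have hfun2 : Mgen t (Sum.inr (Sum.inr (Sum.inl j))) (⇑(S.w t))
          = fun z' => (2 * (t : ℂ)) * Dop j (⇑(S.w t)) z' - (z' j : ℂ) * S.w t z' := by
        funext z'; show 2 * (t:ℂ) * _ - _ = _; ring
      rw [hfun2]
      have hDj : ContDiff ℝ Cinf (Dop j (⇑(S.w t))) := contDiff_const.mul (contDiff_pd hw j)
      have h1 : ContDiff ℝ Cinf (fun z' : Eucl n => (2 * (t : ℂ)) * Dop j (⇑(S.w t)) z') :=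
        contDiff_const.mul hDj
      have h2 : ContDiff ℝ Cinf (fun z' : Eucl n => (z' j : ℂ) * S.w t z') :=
        (contDiff_coordC j).mul hw
      rw [lap_sub h1 h2 z, lap_const_mul hDj (2 * (t : ℂ)) z, lap_coord_mul hw j z]
      have hlapDop : lap (Dop j (⇑(S.w t))) z = -Complex.I * pd j (lap ⇑(S.w t)) z := by
        have : Dop j (⇑(S.w t)) = fun z' => -Complex.I * pd j (⇑(S.w t)) z' := rfl
        rw [this, lap_const_mul (contDiff_pd hw j) (-Complex.I) z, pd_lap hw j z]
      rw [hlapDop]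
      have hD : Dop j (⇑(S.w t)) z = -Complex.I * pd j (⇑(S.w t)) z := rfl
      rw [hD]
      ring
    · -- D_j
      have hfun : (fun s => genCLM s (Sum.inr (Sum.inr (Sum.inr j))) (S.w s) z)
          = fun s => Dop j (⇑(S.w s)) z := by
        funext s; rw [hcoe s]; rfl
      rw [hfun, hcoe t]
      have hder := S.hasDerivAt_Dop j t z
      convert hder using 1
      have hfun2 : Mgen t (Sum.inr (Sum.inr (Sum.inr j))) (⇑(S.w t)) = Dop j (⇑(S.w t)) := rfl
      rw [hfun2]
      have : Dop j (⇑(S.w t)) = fun z' => -Complex.I * pd j (⇑(S.w t)) z' := rfl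
      rw [this, lap_const_mul (contDiff_pd hw j) (-Complex.I) z, pd_lap hw j z]

lemma Sol.gen_coe (a : MIdx n) (t : ℝ) : ⇑((S.gen a).w t) = Mgen t a (⇑(S.w t)) := by
  funext z; exact genCLM_apply t a (S.w t) z

end Sol


section Conservation
open ComplexConjugate

/-- `I * Δ` as a CLM on Schwartz space. -/
def TD {n : ℕ} : 𝓢(Eucl n, ℂ) →L[ℝ] 𝓢(Eucl n, ℂ) :=
  (Complex.I • ∑ j : Fin n, (pderivCLM ℂ (EuclideanSpace.single j 1) ∘L
    pderivCLM ℂ (EuclideanSpace.single j 1))).restrictScalars ℝ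

lemma schwartz_sum_apply {ι : Type*} (s : Finset ι) (g : ι → 𝓢(Eucl n, ℂ)) (z : Eucl n) :
    (∑ i ∈ s, g i) z = ∑ i ∈ s, g i z := by
  induction s using Finset.cons_induction with
  | empty => rfl
  | cons i s his ih => rw [Finset.sum_cons, Finset.sum_cons, SchwartzMap.add_apply, ih]

lemma TD_coe (f : 𝓢(Eucl n, ℂ)) : ⇑(TD f) = lap (⇑f) := by
  funext z
  have h1 : TD f = Complex.I • (∑ j : Fin n, (pderivCLM ℂ (EuclideanSpace.single j 1) ∘L
      pderivCLM ℂ (EuclideanSpace.single j 1))) f := rfl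
  rw [h1, ContinuousLinearMap.sum_apply, SchwartzMap.smul_apply, schwartz_sum_apply]
  simp only [ContinuousLinearMap.comp_apply, pderivCLM_apply, smul_eq_mul]
  show _ = Complex.I * ∑ j, pd j (pd j (⇑f)) z
  have hterm : ∀ j : Fin n, (fderiv ℝ (⇑((pderivCLM ℂ (EuclideanSpace.single j 1)) f)) z)
      (EuclideanSpace.single j 1) = pd j (pd j (⇑f)) z := by
    intro j
    have hco : ⇑(pderivCLM ℂ (EuclideanSpace.single j 1) f) = pd j (⇑f) := by
      funext w; exact pderivCLM_apply ℂ _ f w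
    rw [hco]
    rfl
  rw [Finset.sum_congr rfl (fun j _ => hterm j)]

lemma BddFam.decay {K : Set ℝ} {fam : ℝ → 𝓢(Eucl n, ℂ)} (h : BddFam K fam) (m : ℕ) :
    ∃ C : ℝ, 0 ≤ C ∧ ∀ t ∈ K, ∀ z : Eucl n, ‖fam t z‖ ≤ C * ((1 + ‖z‖) ^ m)⁻¹ := by
  have hmem : ∀ i : ℕ × ℕ, ∃ C : ℝ, 0 ≤ C ∧ ∀ t ∈ K,
      SchwartzMap.seminorm ℝ i.1 i.2 (fam t) ≤ C := by
    intro i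
    obtain ⟨C, hC⟩ := h i.1 i.2
    exact ⟨max C 0, le_max_right _ _, fun t ht => (hC t ht).trans (le_max_left _ _)⟩
  choose Cf hCf0 hCf using hmem
  refine ⟨2 ^ m * ∑ i ∈ Finset.Iic ((m, 0) : ℕ × ℕ), Cf i,
    mul_nonneg (by positivity) (Finset.sum_nonneg fun i _ => hCf0 i), fun t ht z => ?_⟩
  have h1 := one_add_le_sup_seminorm_apply (𝕜 := ℝ) (m := ((m, 0) : ℕ × ℕ))
    le_rfl le_rfl (fam t) z
  rw [norm_iteratedFDeriv_zero] at h1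
  have h2 : (Finset.Iic ((m, 0) : ℕ × ℕ)).sup (schwartzSeminormFamily ℝ (Eucl n) ℂ) (fam t)
      ≤ ∑ i ∈ Finset.Iic ((m, 0) : ℕ × ℕ), Cf i := by
    apply Seminorm.finset_sup_apply_le (Finset.sum_nonneg fun i _ => hCf0 i)
    intro i hi
    exact (hCf i t ht).trans (Finset.single_le_sum (fun i _ => hCf0 i) hi)
  have h3 : (1 + ‖z‖) ^ m * ‖fam t z‖ ≤ 2 ^ m * ∑ i ∈ Finset.Iic ((m, 0) : ℕ × ℕ), Cf i := by
    calc (1 + ‖z‖) ^ m * ‖fam t z‖ ≤ 2 ^ m *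
        (Finset.Iic ((m, 0) : ℕ × ℕ)).sup (schwartzSeminormFamily ℝ (Eucl n) ℂ) (fam t) := h1
      _ ≤ _ := by gcongr
  have hpos : (0:ℝ) < (1 + ‖z‖) ^ m := by positivity
  rw [mul_comm] at h3
  rw [← le_div_iff₀ hpos] at h3
  calc ‖fam t z‖ ≤ (2 ^ m * ∑ i ∈ Finset.Iic ((m, 0) : ℕ × ℕ), Cf i) / (1 + ‖z‖) ^ m := h3
    _ = _ := by rw [div_eq_mul_inv]

lemma hasDerivAt_norm_sq_comp {c : ℝ → ℂ} {c' : ℂ} {τ : ℝ} (h : HasDerivAt c c' τ) :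
    HasDerivAt (fun s => ‖c s‖ ^ 2) (2 * ((starRingEnd ℂ) (c τ) * c').re) τ := by
  have hre : HasDerivAt (fun s => (c s).re) c'.re τ :=
    Complex.reCLM.hasFDerivAt.comp_hasDerivAt τ h
  have him : HasDerivAt (fun s => (c s).im) c'.im τ :=
    Complex.imCLM.hasFDerivAt.comp_hasDerivAt τ h
  have h2 := ((hre.mul hre).add (him.mul him))
  have hfun : (fun s => ‖c s‖ ^ 2) = fun s => (c s).re * (c s).re + (c s).im * (c s).im := by
    funext s
    rw [Complex.sq_norm, Complex.normSq_apply]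
  rw [hfun]
  convert h2 using 1
  case e'_4 => rfl
  case e'_5 => rfl
  case e'_8 => rfl
  simp [Complex.mul_re]
  ring

/-- Integration by parts for Schwartz functions: `∫ conj g ∂ⱼh = -∫ conj (∂ⱼ g) h`. -/
lemma ibp_schwartz (g h : 𝓢(Eucl n, ℂ)) (j : Fin n) :
    ∫ z : Eucl n, (starRingEnd ℂ) (g z) * pd j (⇑h) z
      = - ∫ z : Eucl n, (starRingEnd ℂ) (pd j (⇑g) z) * h z := by
  have hgdiff : Differentiable ℝ (⇑g) := (g.smooth').differentiable Cinf_ne_zero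
  have hhdiff : Differentiable ℝ (⇑h) := (h.smooth').differentiable Cinf_ne_zero
  have hfd : ∀ z, fderiv ℝ (fun w => (starRingEnd ℂ) (g w)) z
      = (Complex.conjCLE.toContinuousLinearMap).comp (fderiv ℝ (⇑g) z) := by
    intro z
    exact (Complex.conjCLE.toContinuousLinearMap.hasFDerivAt.comp z
      (hgdiff z).hasFDerivAt).fderiv
  have hconj_diff : Differentiable ℝ (fun w => (starRingEnd ℂ) (g w)) := by
    intro z
    exact (Complex.conjCLE.toContinuousLinearMap.hasFDerivAt.comp z
      (hgdiff z).hasFDerivAt).differentiableAt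
  have hb1 : ∃ C, ∀ z : Eucl n, ‖(starRingEnd ℂ) (pd j (⇑g) z)‖ ≤ C := by
    refine ⟨SchwartzMap.seminorm ℝ 0 0 (pderivCLM ℝ (EuclideanSpace.single j 1) g), fun z => ?_⟩
    rw [RCLike.norm_conj]
    have := SchwartzMap.norm_le_seminorm ℝ (pderivCLM ℝ (EuclideanSpace.single j 1) g) z
    simpa [pderivCLM_apply, pd] using this
  have hb2 : ∃ C, ∀ z : Eucl n, ‖(starRingEnd ℂ) (g z)‖ ≤ C := by
    refine ⟨SchwartzMap.seminorm ℝ 0 0 g, fun z => ?_⟩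
    rw [RCLike.norm_conj]
    exact SchwartzMap.norm_le_seminorm ℝ g z
  have hmeas1 : AEStronglyMeasurable (fun z : Eucl n => (starRingEnd ℂ) (pd j (⇑g) z)) volume := by
    apply Continuous.aestronglyMeasurable
    exact Complex.continuous_conj.comp (pderivCLM ℝ (EuclideanSpace.single j 1) g).continuous
  have hmeas2 : AEStronglyMeasurable (fun z : Eucl n => (starRingEnd ℂ) (g z)) volume :=
    (Complex.continuous_conj.comp g.continuous).aestronglyMeasurable
  have hint1 : Integrable (fun z : Eucl n => (starRingEnd ℂ) (pd j (⇑g) z) * h z) volume :=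
    h.integrable.bdd_mul hmeas1 (Filter.Eventually.of_forall hb1.choose_spec)
  have hint2 : Integrable (fun z : Eucl n =>
      (starRingEnd ℂ) (g z) * fderiv ℝ (⇑h) z (EuclideanSpace.single j 1)) volume := by
    have : Integrable (fun z : Eucl n => (starRingEnd ℂ) (g z)
        * (pderivCLM ℝ (EuclideanSpace.single j 1) h) z) volume :=
      (pderivCLM ℝ (EuclideanSpace.single j 1) h).integrable.bdd_mul hmeas2 (Filter.Eventually.of_forall hb2.choose_spec)
    simpa [pderivCLM_apply] using this
  have hint3 : Integrable (fun z : Eucl n => (starRingEnd ℂ) (g z) * h z) volume :=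
    h.integrable.bdd_mul hmeas2 (Filter.Eventually.of_forall hb2.choose_spec)
  have key := integral_mul_fderiv_eq_neg_fderiv_mul_of_integrable
    (𝕜 := ℂ) (μ := (volume : Measure (Eucl n)))
    (f := fun z => (starRingEnd ℂ) (g z)) (g := ⇑h) (v := EuclideanSpace.single j 1)
    ?_ hint2 hint3 (fun x _ => hconj_diff x) (fun x _ => hhdiff x)
  · rw [show (fun z : Eucl n => (starRingEnd ℂ) (g z) * pd j (⇑h) z)
      = fun z : Eucl n => (starRingEnd ℂ) (g z) * fderiv ℝ (⇑h) z (EuclideanSpace.single j 1)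
      from rfl]
    rw [key]
    congr 1
    apply integral_congr_ae
    filter_upwards with z
    rw [hfd z]
    rfl
  · -- integrability of fderiv conj g * h
    have : (fun z : Eucl n => fderiv ℝ (fun w => (starRingEnd ℂ) (g w)) z
        (EuclideanSpace.single j 1) * h z)
        = fun z : Eucl n => (starRingEnd ℂ) (pd j (⇑g) z) * h z := by
      funext z
      rw [hfd z]
      rfl
    rw [this]
    exact hint1

lemma integrable_sq_schwartz (g : 𝓢(Eucl n, ℂ)) :
    Integrable (fun z : Eucl n => ‖g z‖ ^ 2) volume := by
  have hint : Integrable (fun z : Eucl n => SchwartzMap.seminorm ℝ 0 0 g * ‖g z‖) volume :=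
    g.integrable.norm.const_mul _
  have hm : AEStronglyMeasurable (fun z : Eucl n => ‖g z‖ ^ 2) (volume : Measure (Eucl n)) :=
    ((g.continuous.norm).pow 2).aestronglyMeasurable
  apply hint.mono' hm
  filter_upwards with z
  have h1 : ‖g z‖ ≤ SchwartzMap.seminorm ℝ 0 0 g := SchwartzMap.norm_le_seminorm ℝ g z
  rw [Real.norm_eq_abs, _root_.abs_of_nonneg (by positivity : (0:ℝ) ≤ ‖g z‖ ^ 2)]
  calc ‖g z‖ ^ 2 = ‖g z‖ * ‖g z‖ := sq ‖g z‖
    _ ≤ SchwartzMap.seminorm ℝ 0 0 g * ‖g z‖ :=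
        mul_le_mul_of_nonneg_right h1 (norm_nonneg _)

/-- The time derivative of the `L²` norm of a solution vanishes. -/
lemma Sol.integral_deriv_zero (S : Sol n) (τ₀ : ℝ) :
    ∫ z : Eucl n, (2 * ((starRingEnd ℂ) (S.w τ₀ z) * TD (S.w τ₀) z).re) = 0 := by
  set g : 𝓢(Eucl n, ℂ) := S.w τ₀ with hg
  have hb : ∃ C, ∀ z : Eucl n, ‖(starRingEnd ℂ) (g z)‖ ≤ C :=
    ⟨SchwartzMap.seminorm ℝ 0 0 g, fun z => by
      rw [RCLike.norm_conj]; exact SchwartzMap.norm_le_seminorm ℝ g z⟩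
  have hmeas : AEStronglyMeasurable (fun z : Eucl n => (starRingEnd ℂ) (g z)) volume :=
    (Complex.continuous_conj.comp g.continuous).aestronglyMeasurable
  have hint : Integrable (fun z : Eucl n => (starRingEnd ℂ) (g z) * TD g z) volume :=
    (TD g).integrable.bdd_mul hmeas (Filter.Eventually.of_forall hb.choose_spec)
  have h1 : ∫ z : Eucl n, (2 * ((starRingEnd ℂ) (g z) * TD g z).re)
      = 2 * (∫ z : Eucl n, (starRingEnd ℂ) (g z) * TD g z).re := by
    simp only [← RCLike.re_to_complex]
    rw [integral_const_mul, integral_re hint]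
  rw [h1]
  have h2 : ∫ z : Eucl n, (starRingEnd ℂ) (g z) * TD g z
      = ∑ j : Fin n, (Complex.I *
          ∫ z : Eucl n, (starRingEnd ℂ) (g z) * pd j (pd j (⇑g)) z) := by
    have hintj : ∀ j : Fin n, Integrable (fun z : Eucl n =>
        Complex.I * ((starRingEnd ℂ) (g z) * pd j (pd j (⇑g)) z)) volume := by
      intro j
      have hco : ⇑(pderivCLM ℝ (EuclideanSpace.single j 1)
          (pderivCLM ℝ (EuclideanSpace.single j 1) g)) = pd j (pd j (⇑g)) := by
        funext w
        rw [pderivCLM_apply]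
        have : ⇑(pderivCLM ℝ (EuclideanSpace.single j 1) g) = pd j (⇑g) := by
          funext w'; exact pderivCLM_apply ℝ _ g w'
        rw [this]
        rfl
      have := ((pderivCLM ℝ (EuclideanSpace.single j 1)
        (pderivCLM ℝ (EuclideanSpace.single j 1) g)).integrable.bdd_mul hmeas (Filter.Eventually.of_forall hb.choose_spec)).const_mul
        Complex.I
      rwa [hco] at this
    have hfun : (fun z : Eucl n => (starRingEnd ℂ) (g z) * TD g z)
        = fun z : Eucl n => ∑ j : Fin n,
            Complex.I * ((starRingEnd ℂ) (g z) * pd j (pd j (⇑g)) z) := by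
      funext z
      rw [TD_coe]
      show (starRingEnd ℂ) (g z) * (Complex.I * ∑ j, pd j (pd j (⇑g)) z) = _
      rw [Finset.mul_sum, Finset.mul_sum]
      apply Finset.sum_congr rfl
      intro j _
      ring
    rw [hfun, integral_finset_sum _ (fun j _ => hintj j)]
    apply Finset.sum_congr rfl
    intro j _
    rw [integral_const_mul]
  rw [h2]
  have h3 : ∀ j : Fin n, ∫ z : Eucl n, (starRingEnd ℂ) (g z) * pd j (pd j (⇑g)) z
      = - ((∫ z : Eucl n, ‖pd j (⇑g) z‖ ^ 2 : ℝ) : ℂ) := by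
    intro j
    have hco : ⇑(pderivCLM ℝ (EuclideanSpace.single j 1) g) = pd j (⇑g) := by
      funext w'; exact pderivCLM_apply ℝ _ g w'
    have := ibp_schwartz g (pderivCLM ℝ (EuclideanSpace.single j 1) g) j
    rw [hco] at this
    rw [this]
    congr 1
    have : (fun z : Eucl n => (starRingEnd ℂ) (pd j (⇑g) z) * pd j (⇑g) z)
        = fun z : Eucl n => ((‖pd j (⇑g) z‖ ^ 2 : ℝ) : ℂ) := by
      funext z
      rw [mul_comm, Complex.mul_conj]
      norm_cast
      rw [Complex.sq_norm]
    rw [this]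
    exact integral_ofReal
  have h4 : (∑ j : Fin n, (Complex.I *
      ∫ z : Eucl n, (starRingEnd ℂ) (g z) * pd j (pd j (⇑g)) z)).re = 0 := by
    rw [Complex.re_sum]
    apply Finset.sum_eq_zero
    intro j _
    rw [h3 j]
    simp
  rw [h4, mul_zero]

/-- Conservation of the `L²` norm along the flow. -/
lemma Sol.L2_conserved (S : Sol n) (s t : ℝ) :
    ∫ z : Eucl n, ‖S.w t z‖ ^ 2 = ∫ z : Eucl n, ‖S.w s z‖ ^ 2 := by
  set F : ℝ → ℝ := fun τ => ∫ z : Eucl n, ‖S.w τ z‖ ^ 2 with hF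
  have key : ∀ τ₀ : ℝ, HasDerivAt F 0 τ₀ := by
    intro τ₀
    have hK : IsCompact (Metric.closedBall τ₀ 1) := isCompact_closedBall τ₀ 1
    have hbdd0 := S.bdd _ hK
    obtain ⟨C0, hC00, hC0⟩ := hbdd0.decay 0
    obtain ⟨C1, hC10, hC1⟩ := (hbdd0.clm TD).decay (n + 1)
    set bound : Eucl n → ℝ := fun z => 2 * C0 * C1 * ((1 + ‖z‖) ^ (n + 1))⁻¹ with hbound_def
    have hbound_int : Integrable bound volume := by
      have hr : ((Module.finrank ℝ (Eucl n) : ℝ)) < (((n+1 : ℕ) : ℝ)) := by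
        rw [finrank_euclideanSpace_fin]
        exact_mod_cast Nat.lt_succ_self n
      have hint := (integrable_one_add_norm (E := Eucl n) (μ := volume)
        (r := ((n+1 : ℕ) : ℝ)) hr).const_mul (2 * C0 * C1)
      apply hint.congr
      filter_upwards with z
      rw [hbound_def]
      have h1p : (0:ℝ) < 1 + ‖z‖ := by positivity
      rw [Real.rpow_neg h1p.le, Real.rpow_natCast]
    have hder := hasDerivAt_integral_of_dominated_loc_of_deriv_le
      (F := fun τ (z : Eucl n) => ‖S.w τ z‖ ^ 2)
      (F' := fun τ (z : Eucl n) => 2 * ((starRingEnd ℂ) (S.w τ z) * TD (S.w τ) z).re)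
      (x₀ := τ₀) (s := Metric.ball τ₀ 1) (bound := bound) (Metric.ball_mem_nhds τ₀ one_pos)
      (Filter.Eventually.of_forall fun τ =>
        ((continuous_norm.comp (S.w τ).continuous).pow 2).aestronglyMeasurable)
      (integrable_sq_schwartz (S.w τ₀))
      (by
        apply Continuous.aestronglyMeasurable
        apply Continuous.mul continuous_const
        apply Complex.continuous_re.comp
        exact (Complex.continuous_conj.comp (S.w τ₀).continuous).mul (TD (S.w τ₀)).continuous)
      (by
        filter_upwards with z
        intro x hx
        have hxK : x ∈ Metric.closedBall τ₀ 1 := Metric.ball_subset_closedBall hx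
        have e1 : ‖S.w x z‖ ≤ C0 := by
          have := hC0 x hxK z
          simpa using this
        have e2 : ‖TD (S.w x) z‖ ≤ C1 * ((1 + ‖z‖) ^ (n+1))⁻¹ := hC1 x hxK z
        have e3 : |2 * ((starRingEnd ℂ) (S.w x z) * TD (S.w x) z).re|
            ≤ 2 * (‖S.w x z‖ * ‖TD (S.w x) z‖) := by
          have habs : |((starRingEnd ℂ) (S.w x z) * TD (S.w x) z).re|
              ≤ ‖(starRingEnd ℂ) (S.w x z) * TD (S.w x) z‖ := Complex.abs_re_le_norm _
          have h2 : |(2:ℝ)| = 2 := by norm_num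
          calc |2 * ((starRingEnd ℂ) (S.w x z) * TD (S.w x) z).re|
              = 2 * |((starRingEnd ℂ) (S.w x z) * TD (S.w x) z).re| := by
                rw [abs_mul, h2]
            _ ≤ 2 * ‖(starRingEnd ℂ) (S.w x z) * TD (S.w x) z‖ := by gcongr
            _ = 2 * (‖S.w x z‖ * ‖TD (S.w x) z‖) := by
                rw [norm_mul, RCLike.norm_conj]
        rw [Real.norm_eq_abs]
        refine e3.trans ?_
        rw [hbound_def]
        have : ‖S.w x z‖ * ‖TD (S.w x) z‖ ≤ C0 * (C1 * ((1 + ‖z‖) ^ (n+1))⁻¹) := by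
          apply mul_le_mul e1 e2 (norm_nonneg _) hC00
        calc 2 * (‖S.w x z‖ * ‖TD (S.w x) z‖)
            ≤ 2 * (C0 * (C1 * ((1 + ‖z‖) ^ (n+1))⁻¹)) := by linarith
          _ = 2 * C0 * C1 * ((1 + ‖z‖) ^ (n + 1))⁻¹ := by ring)
      hbound_int
      (by
        filter_upwards with z
        intro x hx
        have h := hasDerivAt_norm_sq_comp (S.eqn x z)
        have : lap (⇑(S.w x)) z = TD (S.w x) z := by rw [TD_coe]
        rwa [this] at h)
    have := hder.2
    rw [S.integral_deriv_zero τ₀] at this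
    exact this
  have hdiff : Differentiable ℝ F := fun τ => (key τ).differentiableAt
  have hzero : ∀ τ, deriv F τ = 0 := fun τ => (key τ).deriv
  exact is_const_of_deriv_eq_zero hdiff hzero t s

end Conservation


section Assemble

lemma applyTuple_zero {X ι : Type*} (gen : ι → (X → ℂ) → (X → ℂ)) (A : Fin 0 → ι) (u : X → ℂ) :
    applyTuple gen A u = u := by
  simp [applyTuple]

lemma applyTuple_succ {X ι : Type*} (gen : ι → (X → ℂ) → (X → ℂ)) {k : ℕ}
    (A : Fin (k+1) → ι) (u : X → ℂ) :
    applyTuple gen A u = gen (A 0) (applyTuple gen (fun i => A i.succ) u) := by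
  simp [applyTuple, List.ofFn_succ]

lemma sol_tuple (S : Sol n) : ∀ (k : ℕ) (A : Fin k → MIdx n),
    ∃ S' : Sol n, ∀ t, ⇑(S'.w t) = applyTuple (Mgen t) A (⇑(S.w t)) := by
  intro k
  induction k with
  | zero =>
    intro A
    exact ⟨S, fun t => by rw [applyTuple_zero]⟩
  | succ k ih =>
    intro A
    obtain ⟨S', hS'⟩ := ih (fun i => A i.succ)
    refine ⟨S'.gen (A 0), fun t => ?_⟩
    rw [Sol.gen_coe, applyTuple_succ, hS' t]

lemma eLp_toReal_eq {g h : 𝓢(Eucl n, ℂ)}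
    (hint : ∫ z : Eucl n, ‖g z‖ ^ 2 = ∫ z : Eucl n, ‖h z‖ ^ 2) :
    (eLpNorm ⇑g 2 volume).toReal = (eLpNorm ⇑h 2 volume).toReal := by
  have hmem : ∀ f : 𝓢(Eucl n, ℂ), MemLp ⇑f 2 (volume : Measure (Eucl n)) := fun f =>
    (memLp_two_iff_integrable_sq_norm f.continuous.aestronglyMeasurable).2
      (integrable_sq_schwartz f)
  have key : ∀ f : 𝓢(Eucl n, ℂ), ∫ z : Eucl n, ‖f z‖ ^ ((2:ENNReal)).toReal
      = ∫ z : Eucl n, ‖f z‖ ^ 2 := by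
    intro f
    apply integral_congr_ae
    filter_upwards with z
    rw [show ((2:ENNReal)).toReal = ((2:ℕ):ℝ) by simp, Real.rpow_natCast]
  have hb : ∀ f : 𝓢(Eucl n, ℂ), (0:ℝ) ≤ (∫ z : Eucl n, ‖f z‖ ^ ((2:ENNReal)).toReal)
      ^ ((2:ENNReal)).toReal⁻¹ := by
    intro f
    apply Real.rpow_nonneg
    apply integral_nonneg
    intro z
    apply Real.rpow_nonneg (norm_nonneg _)
  rw [(hmem g).eLpNorm_eq_integral_rpow_norm two_ne_zero ENNReal.ofNat_ne_top,
    (hmem h).eLpNorm_eq_integral_rpow_norm two_ne_zero ENNReal.ofNat_ne_top,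
    ENNReal.toReal_ofReal (hb g), ENNReal.toReal_ofReal (hb h)]
  congr 1
  rw [key g, key h, hint]

end Assemble


/-- for a Schwartz-class solution of the free Schrödinger equation
`(D_t + Δ)u = 0`, the module regularity norm is conserved:
`‖u(t,·)‖_{W^k_{M_t}} = ‖u(s,·)‖_{W^k_{M_s}}` for `s, t ≥ 1/2`. -/
theorem stmt15 (n k : ℕ) (hn : 1 ≤ n) (u : ℝ → Eucl n → ℂ)
    (hsmooth : ContDiff ℝ (⊤ : ℕ∞) fun q : ℝ × Eucl n => u q.1 q.2)
    (hschwartz : ∀ t, ∃ w : SchwartzMap (Eucl n) ℂ, ⇑w = u t)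
    (hschwartz_deriv : ∀ t, ∃ w : SchwartzMap (Eucl n) ℂ,
      ⇑w = fun z => deriv (fun s => u s z) t)
    (hlocUnif : ∀ (m l : ℕ) (K : Set ℝ), IsCompact K → ∃ C : ℝ, ∀ t ∈ K, ∀ z : Eucl n,
      ‖z‖ ^ m * ‖iteratedFDeriv ℝ l (u t) z‖ ≤ C ∧
      ‖z‖ ^ m * ‖iteratedFDeriv ℝ l (fun w => deriv (fun s => u s w) t) z‖ ≤ C)
    (heqn : ∀ t z, deriv (fun s => u s z) t = Complex.I * ∑ j, pd j (pd j (u t)) z)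
    (s t : ℝ) (hs : 1 / 2 ≤ s) (ht : 1 / 2 ≤ t) :
    Wnorm (Mgen t) k (u t) = Wnorm (Mgen s) k (u s) := by
  classical
  choose W hWc using hschwartz
  have hsmoothC : ContDiff ℝ Cinf fun q : ℝ × Eucl n => u q.1 q.2 := hsmooth.of_le (by simp)
  have hsm2 : ContDiff ℝ Cinf fun q : ℝ × Eucl n => W q.1 q.2 := by
    have he : (fun q : ℝ × Eucl n => W q.1 q.2) = fun q : ℝ × Eucl n => u q.1 q.2 := by
      funext q
      rw [show (W q.1) q.2 = u q.1 q.2 from congrFun (hWc q.1) q.2]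
    rw [he]
    exact hsmoothC
  have hbdd : ∀ K : Set ℝ, IsCompact K → BddFam K W := by
    intro K hK m l
    obtain ⟨C, hC⟩ := hlocUnif m l K hK
    refine ⟨max C 0, fun τ hτ => ?_⟩
    apply SchwartzMap.seminorm_le_bound ℝ m l _ (le_max_right C 0)
    intro z
    rw [hWc τ]
    exact (hC τ hτ z).1.trans (le_max_left _ _)
  have heqnW : ∀ t z, HasDerivAt (fun s => W s z) (lap (⇑(W t)) z) t := by
    intro t z
    have hu : HasDerivAt (fun s => u s z)
        (fderiv ℝ (fun q : ℝ × Eucl n => u q.1 q.2) (t, z) (1, 0)) t :=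
      hasDerivAt_slice hsmoothC t z
    have hval : lap (u t) z
        = fderiv ℝ (fun q : ℝ × Eucl n => u q.1 q.2) (t, z) (1, 0) := by
      rw [show lap (u t) z = Complex.I * ∑ j, pd j (pd j (u t)) z from rfl,
        ← heqn t z, hu.deriv]
    have hfz : (fun s => W s z) = fun s => u s z := by
      funext s
      exact congrFun (hWc s) z
    rw [hfz, hWc t, hval]
    exact hu
  set S0 : Sol n := ⟨W, hsm2, hbdd, heqnW⟩ with hS0
  have perA : ∀ A : Fin k → MIdx n,
      (eLpNorm (applyTuple (Mgen t) A (u t)) 2 volume).toReal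
        = (eLpNorm (applyTuple (Mgen s) A (u s)) 2 volume).toReal := by
    intro A
    obtain ⟨SA, hSA⟩ := sol_tuple S0 k A
    have h1 : ∀ τ : ℝ, applyTuple (Mgen τ) A (u τ) = ⇑(SA.w τ) := by
      intro τ
      rw [hSA τ]
      rw [show ⇑(S0.w τ) = u τ from hWc τ]
    rw [h1 t, h1 s]
    exact eLp_toReal_eq (SA.L2_conserved s t)
  unfold Wnorm
  congr 1
  apply Finset.sum_congr rfl
  intro A _
  rw [perA A]
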